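/- If the fundamental tensor F satisfies the defining condition of class F₇, then the torsion tensor T² of the second natural connection satisfies T²(x,y,z) = η(x)T²(ξ,y,z) − η(y)T²(ξ,x,z) + T²(x,y,ξ)η(z), T²(ξ,y,z) = −T²(ξ,z,y) = T²(ξ,φy,φz), and T²(y,z,ξ) = T²(φy,φz,ξ) for all x, y, z ∈ V. -/

import Mathlib

/-! In class F₇ the whole tensor `F` is carried by the skew, `φ`-invariant 2-form
`ω(x, y) = F(x, y, ξ)`, which vanishes as soon as one argument is `ξ` and satisfies
`ω(x, φy) = ω(φx, y)`. Substituting this into the potentials collapses the torsion to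
`T²(x, y, z) = -2 η(z) ω(x, φy)`, from which every listed identity is immediate; in particular
`T²(ξ, y, z) = 0`. -/

open scoped RealInnerProductSpace

noncomputable section

variable {V : Type*} [NormedAddCommGroup V] [InnerProductSpace ℝ V]

/-- A Riemannian Π-structure on a real inner product space `V`:
a linear map `phi`, a vector `xi` (with dual form `η x = ⟪x, xi⟫`) satisfying
the defining algebraic identities. -/
structure PiStruct (V : Type*) [NormedAddCommGroup V] [InnerProductSpace ℝ V] where
  phi : V →ₗ[ℝ] V
  xi : V
  phi_xi : phi xi = 0
  phi_phi : ∀ x : V, phi (phi x) = x - (⟪x, xi⟫ : ℝ) • xi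
  eta_phi : ∀ x : V, ⟪phi x, xi⟫ = 0
  eta_xi : ⟪xi, xi⟫ = (1 : ℝ)
  g_phi_phi : ∀ x y : V, ⟪phi x, phi y⟫ = ⟪x, y⟫ - ⟪x, xi⟫ * ⟪y, xi⟫
  g_phi_symm : ∀ x y : V, ⟪phi x, y⟫ = ⟪x, phi y⟫

/-- Trilinear real-valued maps on `V`. -/
abbrev Tri (V : Type*) [NormedAddCommGroup V] [InnerProductSpace ℝ V] :=
  V →ₗ[ℝ] V →ₗ[ℝ] V →ₗ[ℝ] ℝ

/-- The 1-form `η(x) = g(x, ξ)`. -/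
def PiStruct.eta (P : PiStruct V) (x : V) : ℝ := ⟪x, P.xi⟫

/-- `F` is a fundamental tensor for the Π-structure `P`. -/
def IsFund (P : PiStruct V) (F : Tri V) : Prop :=
  (∀ x y z : V, F x y z = F x z y) ∧
  (∀ x y z : V, F x y z =
    -F x (P.phi y) (P.phi z) + P.eta y * F x P.xi z + P.eta z * F x y P.xi)

/-- The Nijenhuis tensor of `F`. -/
def Nij (P : PiStruct V) (F : Tri V) (x y z : V) : ℝ :=
  F (P.phi x) y z - F (P.phi y) x z - F x y (P.phi z) + F y x (P.phi z)
    + P.eta z * (F x (P.phi y) P.xi - F y (P.phi x) P.xi)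

/-- The potential of the first natural connection. -/
def Q1 (P : PiStruct V) (F : Tri V) (x y z : V) : ℝ :=
  -(1/2) * F x (P.phi y) z - (1/2) * P.eta z * F x (P.phi y) P.xi
    + P.eta y * F x (P.phi z) P.xi

/-- The potential of the second natural connection. -/
def Q2 (P : PiStruct V) (F : Tri V) (x y z : V) : ℝ :=
  Q1 P F x y z - (1/8) * (Nij P F (P.phi (P.phi z)) (P.phi (P.phi y)) (P.phi (P.phi x))
    + 2 * P.eta x * Nij P F (P.phi z) (P.phi y) P.xi)

/-- The torsion tensor of the first natural connection. -/
def T1 (P : PiStruct V) (F : Tri V) (x y z : V) : ℝ :=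
  -(1/2) * (F x (P.phi y) z - F y (P.phi x) z)
    - (1/2) * P.eta z * (F x (P.phi y) P.xi - F y (P.phi x) P.xi)
    + P.eta y * F x (P.phi z) P.xi - P.eta x * F y (P.phi z) P.xi

/-- The torsion tensor of the second natural connection. -/
def T2 (P : PiStruct V) (F : Tri V) (x y z : V) : ℝ :=
  Q2 P F x y z - Q2 P F y x z

/-- Identity (*) for a torsion-like tensor `T`. -/
def StarId (P : PiStruct V) (T : V → V → V → ℝ) : Prop :=
  ∀ x y z : V,
    T x y z + T y z x + T (P.phi x) y (P.phi z) + T y (P.phi z) (P.phi x)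
    - P.eta x * (T P.xi y z + T y z P.xi - P.eta y * T P.xi z P.xi)
    - P.eta y * (T x P.xi z + T P.xi z x + T (P.phi x) P.xi (P.phi z)
        + T P.xi (P.phi z) (P.phi x))
    - P.eta z * (T x y P.xi + T y P.xi x - P.eta y * T x P.xi P.xi) = 0

/-- The defining condition of the basic class F₇. -/
def ClassF7 (P : PiStruct V) (F : Tri V) : Prop :=
  (∀ x y z : V, F x y z = F x y P.xi * P.eta z + F x z P.xi * P.eta y) ∧
  (∀ x y : V, F x y P.xi = -F y x P.xi) ∧
  (∀ x y : V, F x y P.xi = F (P.phi x) (P.phi y) P.xi)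

namespace PiStruct

variable (P : PiStruct V)

lemma eta_phi_eq_zero (x : V) : P.eta (P.phi x) = 0 := P.eta_phi x

lemma eta_xi_eq_one : P.eta P.xi = 1 := P.eta_xi

end PiStruct

section ClassF7

variable {P : PiStruct V} {F : Tri V}

lemma F_xi_left_xi_eq_zero (hinv : ∀ x y : V, F x y P.xi = F (P.phi x) (P.phi y) P.xi)
    (y : V) : F P.xi y P.xi = 0 := by
  simpa [P.phi_xi] using hinv P.xi y

lemma F_xi_right_xi_eq_zero (hinv : ∀ x y : V, F x y P.xi = F (P.phi x) (P.phi y) P.xi)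
    (x : V) : F x P.xi P.xi = 0 := by
  simpa [P.phi_xi] using hinv x P.xi

lemma F_phi_right_xi (hinv : ∀ x y : V, F x y P.xi = F (P.phi x) (P.phi y) P.xi) (x y : V) :
    F x (P.phi y) P.xi = F (P.phi x) y P.xi := by
  rw [hinv, P.phi_phi, map_sub, map_smul, LinearMap.sub_apply, LinearMap.smul_apply,
    F_xi_right_xi_eq_zero hinv, smul_zero, sub_zero]

lemma Q1_eq_of_decomp
    (hdecomp : ∀ x y z : V, F x y z = F x y P.xi * P.eta z + F x z P.xi * P.eta y) (x y z : V) :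
    Q1 P F x y z = -P.eta z * F x (P.phi y) P.xi + P.eta y * F x (P.phi z) P.xi := by
  rw [Q1, hdecomp x (P.phi y) z, P.eta_phi_eq_zero]
  ring

lemma Nij_eq_of_classF7 (h7 : ClassF7 P F) (x y z : V) :
    Nij P F x y z = 4 * P.eta z * F (P.phi x) y P.xi := by
  obtain ⟨hdecomp, hskew, hinv⟩ := h7
  simp only [Nij, hdecomp (P.phi x) y z, hdecomp (P.phi y) x z, hdecomp x y (P.phi z),
    hdecomp y x (P.phi z), P.eta_phi_eq_zero, mul_zero, F_phi_right_xi hinv,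
    hskew (P.phi y) x]
  ring

lemma Q2_eq_of_classF7 (h7 : ClassF7 P F) (x y z : V) :
    Q2 P F x y z = -P.eta z * F x (P.phi y) P.xi + P.eta y * F x (P.phi z) P.xi
      + P.eta x * F y (P.phi z) P.xi := by
  have hNij := Nij_eq_of_classF7 h7
  obtain ⟨hdecomp, hskew, hinv⟩ := h7
  -- the first Nijenhuis term carries the factor `η(φ²x) = 0`
  rw [Q2, Q1_eq_of_decomp hdecomp, hNij, hNij, P.eta_phi_eq_zero, P.eta_xi_eq_one,
    ← hinv (P.phi z) y, hskew (P.phi z), F_phi_right_xi hinv y z]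
  ring

lemma T2_eq_of_classF7 (h7 : ClassF7 P F) (x y z : V) :
    T2 P F x y z = -2 * P.eta z * F x (P.phi y) P.xi := by
  rw [T2, Q2_eq_of_classF7 h7, Q2_eq_of_classF7 h7, F_phi_right_xi h7.2.2 y x, h7.2.1 (P.phi y)]
  ring

lemma T2_xi_left_eq_zero_of_classF7 (h7 : ClassF7 P F) (y z : V) : T2 P F P.xi y z = 0 := by
  rw [T2_eq_of_classF7 h7, F_xi_left_xi_eq_zero h7.2.2, mul_zero]

end ClassF7

theorem classF7_T2_properties_general
    (P : PiStruct V) (F : Tri V)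
    (h7 : ClassF7 P F) :
    (∀ x y z : V, T2 P F x y z =
      P.eta x * T2 P F P.xi y z - P.eta y * T2 P F P.xi x z + T2 P F x y P.xi * P.eta z) ∧
    (∀ y z : V, T2 P F P.xi y z = -T2 P F P.xi z y) ∧
    (∀ y z : V, T2 P F P.xi y z = T2 P F P.xi (P.phi y) (P.phi z)) ∧
    (∀ y z : V, T2 P F y z P.xi = T2 P F (P.phi y) (P.phi z) P.xi) := by
  have hT2_xi_left := T2_xi_left_eq_zero_of_classF7 h7
  refine ⟨fun x y z => ?_, fun y z => ?_, fun y z => ?_, fun y z => ?_⟩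
  · rw [hT2_xi_left, hT2_xi_left, T2_eq_of_classF7 h7, T2_eq_of_classF7 h7 x y P.xi,
      P.eta_xi_eq_one]
    ring
  · rw [hT2_xi_left, hT2_xi_left, neg_zero]
  · rw [hT2_xi_left, hT2_xi_left]
  · rw [T2_eq_of_classF7 h7, T2_eq_of_classF7 h7, h7.2.2 y (P.phi z)]

/-- characterisation of the torsion `T²` in the class F₇. -/
theorem classF7_T2_properties
    [FiniteDimensional ℝ V] (n : ℕ) (hn : 1 ≤ n)
    (hdim : Module.finrank ℝ V = 2 * n + 1)
    (P : PiStruct V) (F : Tri V) (hF : IsFund P F)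
    (h7 : ClassF7 P F) :
    (∀ x y z : V, T2 P F x y z =
      P.eta x * T2 P F P.xi y z - P.eta y * T2 P F P.xi x z + T2 P F x y P.xi * P.eta z) ∧
    (∀ y z : V, T2 P F P.xi y z = -T2 P F P.xi z y) ∧
    (∀ y z : V, T2 P F P.xi y z = T2 P F P.xi (P.phi y) (P.phi z)) ∧
    (∀ y z : V, T2 P F y z P.xi = T2 P F (P.phi y) (P.phi z) P.xi) :=
  classF7_T2_properties_general P F h7
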